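/- Let Z_1(p,q) = Σ_{α} q_α² − 1 and Z_2(p,q) = Σ_{α} p_α q_α. At every point (p,q) of the constraint surface {Z_1 = 0, Z_2 = 0} (so that {Z_1,Z_2}(p,q) = −2 ≠ 0), the Dirac bracket of any two dual Moser functions vanishes: {F_α, F_β}(p,q) − (1/{Z_1,Z_2}(p,q)) · [ {Z_1,F_α}(p,q) {Z_2,F_β}(p,q) − {Z_1,F_β}(p,q) {Z_2,F_α}(p,q) ] = 0 for all α, β ∈ {0,…,n}. -/

import Mathlib

open Finset

/-- Partial derivative with respect to the momentum variable `p α`. -/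
noncomputable def pderivP {m : ℕ} (F : (Fin m → ℝ) → (Fin m → ℝ) → ℝ)
    (α : Fin m) (p q : Fin m → ℝ) : ℝ :=
  deriv (fun t => F (Function.update p α t) q) (p α)

/-- Partial derivative with respect to the position variable `q α`. -/
noncomputable def pderivQ {m : ℕ} (F : (Fin m → ℝ) → (Fin m → ℝ) → ℝ)
    (α : Fin m) (p q : Fin m → ℝ) : ℝ :=
  deriv (fun t => F p (Function.update q α t)) (q α)

/-- Canonical Poisson bracket on `ℝ^m × ℝ^m`:
`{F,G} = Σ_α (∂F/∂p_α ∂G/∂q_α − ∂F/∂q_α ∂G/∂p_α)`. -/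
noncomputable def pbracket {m : ℕ} (F G : (Fin m → ℝ) → (Fin m → ℝ) → ℝ)
    (p q : Fin m → ℝ) : ℝ :=
  ∑ α, (pderivP F α p q * pderivQ G α p q - pderivQ F α p q * pderivP G α p q)

/-- The dual Moser first integrals
`F_α(p,q) = q_α² Σ_β a_β p_β² + Σ_{β≠α} (a_α p_α q_β − a_β p_β q_α)²/(a_α − a_β)`. -/
noncomputable def dualMoser {m : ℕ} (a : Fin m → ℝ) (α : Fin m)
    (p q : Fin m → ℝ) : ℝ :=
  (q α) ^ 2 * ∑ β, a β * (p β) ^ 2 +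
    ∑ β ∈ univ \ {α}, (a α * p α * q β - a β * p β * q α) ^ 2 / (a α - a β)

/-- Constraint `Z_1(p,q) = Σ_α q_α² − 1`. -/
noncomputable def Z1 {m : ℕ} (p q : Fin m → ℝ) : ℝ := (∑ α, (q α) ^ 2) - 1

/-- Constraint `Z_2(p,q) = Σ_α p_α q_α`. -/
noncomputable def Z2 {m : ℕ} (p q : Fin m → ℝ) : ℝ := ∑ α, p α * q α

lemma hasDerivAt_upd {m : ℕ} (p : Fin m → ℝ) (γ β : Fin m) :
    HasDerivAt (fun t => Function.update p γ t β) (if β = γ then 1 else 0) (p γ) := by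
  by_cases h : β = γ
  · subst h; simp only [Function.update_self, if_pos rfl]; exact hasDerivAt_id _
  · simp only [Function.update_of_ne h, if_neg h]; exact hasDerivAt_const _ _

lemma pderivP_dualMoser {m : ℕ} (a : Fin m → ℝ) (α γ : Fin m) (p q : Fin m → ℝ) :
    pderivP (dualMoser a α) γ p q =
      q α ^ 2 * (2 * a γ * p γ) +
      ∑ β ∈ univ \ {α}, 2 * (a α * p α * q β - a β * p β * q α) *
        ((if α = γ then a α * q β else 0) - (if β = γ then a β * q α else 0)) / (a α - a β) := by
  have key : HasDerivAt (fun t => dualMoser a α (Function.update p γ t) q)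
      (q α ^ 2 * ∑ β, a β * (2 * Function.update p γ (p γ) β ^ 1 * (if β = γ then 1 else 0)) +
       ∑ β ∈ univ \ {α},
        (2 * (a α * Function.update p γ (p γ) α * q β - a β * Function.update p γ (p γ) β * q α) ^ 1 *
          (a α * (if α = γ then 1 else 0) * q β - a β * (if β = γ then 1 else 0) * q α)) / (a α - a β)) (p γ) := by
    unfold dualMoser
    apply HasDerivAt.add
    · exact (HasDerivAt.fun_sum (fun β _ => ((hasDerivAt_upd p γ β).fun_pow 2).const_mul (a β))).const_mul _
    · exact HasDerivAt.fun_sum (fun β hβ =>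
        (((((hasDerivAt_upd p γ α).const_mul (a α)).mul_const (q β)).fun_sub
          (((hasDerivAt_upd p γ β).const_mul (a β)).mul_const (q α))).fun_pow 2).div_const _)
  rw [pderivP, key.deriv]
  simp only [Function.update_eq_self, pow_one, mul_ite, ite_mul, mul_one, mul_zero, zero_mul]
  rw [Finset.sum_ite_eq' univ γ (fun x => a x * (2 * p x))]
  simp only [mem_univ, if_true]
  ring

lemma pderivQ_dualMoser {m : ℕ} (a : Fin m → ℝ) (α γ : Fin m) (p q : Fin m → ℝ) :
    pderivQ (dualMoser a α) γ p q =
      (if α = γ then 2 * q α * (∑ β, a β * p β ^ 2) else 0) +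
      ∑ β ∈ univ \ {α}, 2 * (a α * p α * q β - a β * p β * q α) *
        ((if β = γ then a α * p α else 0) - (if α = γ then a β * p β else 0)) / (a α - a β) := by
  have key : HasDerivAt (fun t => dualMoser a α p (Function.update q γ t))
      ((2 * Function.update q γ (q γ) α ^ 1 * (if α = γ then 1 else 0)) * (∑ β, a β * p β ^ 2) +
       ∑ β ∈ univ \ {α},
        (2 * (a α * p α * Function.update q γ (q γ) β - a β * p β * Function.update q γ (q γ) α) ^ 1 *
          (a α * p α * (if β = γ then 1 else 0) - a β * p β * (if α = γ then 1 else 0))) / (a α - a β)) (q γ) := by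
    unfold dualMoser
    apply HasDerivAt.add
    · exact ((hasDerivAt_upd q γ α).pow 2).mul_const _
    · exact HasDerivAt.fun_sum (fun β hβ =>
        ((((hasDerivAt_upd q γ β).const_mul (a α * p α)).fun_sub
          ((hasDerivAt_upd q γ α).const_mul (a β * p β))).fun_pow 2).div_const _)
  rw [pderivQ, key.deriv]
  simp only [Function.update_eq_self, pow_one]
  congr 1
  · by_cases h : α = γ <;> simp [h] <;> ring
  · exact Finset.sum_congr rfl (fun β _ => by
      by_cases h1 : β = γ <;> by_cases h2 : α = γ <;> simp [h1, h2])

lemma pderivP_dM_ne {m : ℕ} (a : Fin m → ℝ) {α γ : Fin m} (h : γ ≠ α) (p q : Fin m → ℝ) :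
    pderivP (dualMoser a α) γ p q =
      2 * a γ * p γ * q α ^ 2 -
        2 * a γ * q α * (a α * p α * q γ - a γ * p γ * q α) / (a α - a γ) := by
  rw [pderivP_dualMoser]
  have hmem : γ ∈ univ \ ({α} : Finset (Fin m)) := by simp [h]
  rw [Finset.sum_eq_single_of_mem γ hmem (fun β _ hβ => by
    simp [if_neg hβ, if_neg (fun hc : α = γ => h hc.symm)])]
  simp [if_neg (fun hc : α = γ => h hc.symm)]
  ring

lemma pderivP_dM_self {m : ℕ} (a : Fin m → ℝ) (α : Fin m) (p q : Fin m → ℝ) :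
    pderivP (dualMoser a α) α p q =
      2 * a α * p α * q α ^ 2 +
        ∑ δ ∈ univ \ {α}, 2 * a α * q δ * (a α * p α * q δ - a δ * p δ * q α) / (a α - a δ) := by
  rw [pderivP_dualMoser]
  congr 1
  · ring
  · refine Finset.sum_congr rfl (fun β hβ => ?_)
    have hβα : β ≠ α := by simpa using (Finset.mem_sdiff.mp hβ).2
    simp [if_neg hβα]
    ring

lemma pderivQ_dM_ne {m : ℕ} (a : Fin m → ℝ) {α γ : Fin m} (h : γ ≠ α) (p q : Fin m → ℝ) :
    pderivQ (dualMoser a α) γ p q =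
      2 * a α * p α * (a α * p α * q γ - a γ * p γ * q α) / (a α - a γ) := by
  rw [pderivQ_dualMoser]
  have hmem : γ ∈ univ \ ({α} : Finset (Fin m)) := by simp [h]
  rw [Finset.sum_eq_single_of_mem γ hmem (fun β _ hβ => by
    simp [if_neg hβ, if_neg (fun hc : α = γ => h hc.symm)])]
  simp [if_neg (fun hc : α = γ => h hc.symm)]
  ring

lemma pderivQ_dM_self {m : ℕ} (a : Fin m → ℝ) (α : Fin m) (p q : Fin m → ℝ) :
    pderivQ (dualMoser a α) α p q =
      2 * q α * (∑ β, a β * p β ^ 2) -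
        ∑ δ ∈ univ \ {α}, 2 * a δ * p δ * (a α * p α * q δ - a δ * p δ * q α) / (a α - a δ) := by
  rw [pderivQ_dualMoser, if_pos rfl, sub_eq_add_neg, ← Finset.sum_neg_distrib]
  congr 1
  refine Finset.sum_congr rfl (fun β hβ => ?_)
  have hβα : β ≠ α := by simpa using (Finset.mem_sdiff.mp hβ).2
  simp [if_neg hβα]
  ring

lemma pderivP_Z1 {m : ℕ} (γ : Fin m) (p q : Fin m → ℝ) : pderivP Z1 γ p q = 0 := by
  simp [pderivP, Z1]

lemma pderivQ_Z1 {m : ℕ} (γ : Fin m) (p q : Fin m → ℝ) : pderivQ Z1 γ p q = 2 * q γ := by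
  have key : HasDerivAt (fun t => Z1 p (Function.update q γ t))
      ((∑ α, 2 * Function.update q γ (q γ) α ^ 1 * (if α = γ then 1 else 0))) (q γ) := by
    unfold Z1
    exact (HasDerivAt.fun_sum (fun β _ => (hasDerivAt_upd q γ β).fun_pow 2)).sub_const 1
  rw [pderivQ, key.deriv]
  simp only [Function.update_eq_self, pow_one, mul_ite, mul_one, mul_zero]
  rw [Finset.sum_ite_eq' univ γ (fun x => 2 * q x)]
  simp

lemma pderivP_Z2 {m : ℕ} (γ : Fin m) (p q : Fin m → ℝ) : pderivP Z2 γ p q = q γ := by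
  have key : HasDerivAt (fun t => Z2 (Function.update p γ t) q)
      (∑ α, (if α = γ then 1 else 0) * q α) (p γ) := by
    unfold Z2
    exact HasDerivAt.fun_sum (fun β _ => (hasDerivAt_upd p γ β).mul_const (q β))
  rw [pderivP, key.deriv]
  simp only [ite_mul, one_mul, zero_mul]
  rw [Finset.sum_ite_eq' univ γ q]
  simp

lemma pderivQ_Z2 {m : ℕ} (γ : Fin m) (p q : Fin m → ℝ) : pderivQ Z2 γ p q = p γ := by
  have key : HasDerivAt (fun t => Z2 p (Function.update q γ t))
      (∑ α, p α * (if α = γ then 1 else 0)) (q γ) := by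
    unfold Z2
    exact HasDerivAt.fun_sum (fun β _ => (hasDerivAt_upd q γ β).const_mul (p β))
  rw [pderivQ, key.deriv]
  simp only [mul_ite, mul_one, mul_zero]
  rw [Finset.sum_ite_eq' univ γ p]
  simp

lemma pbracket_Z2_dM {m : ℕ} (a : Fin m → ℝ) (hinj : Function.Injective a)
    (α : Fin m) (p q : Fin m → ℝ) : pbracket Z2 (dualMoser a α) p q = 0 := by
  have key : ∀ γ ∈ univ \ ({α} : Finset (Fin m)),
      pderivP Z2 γ p q * pderivQ (dualMoser a α) γ p q -
        pderivQ Z2 γ p q * pderivP (dualMoser a α) γ p q =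
      q α * (2 * a γ * p γ * (a α * p α * q γ - a γ * p γ * q α) / (a α - a γ)) +
      p α * (2 * a α * q γ * (a α * p α * q γ - a γ * p γ * q α) / (a α - a γ)) -
      q α ^ 2 * (2 * (a γ * p γ ^ 2)) := by
    intro γ hγ
    have hγα : γ ≠ α := by simpa using (Finset.mem_sdiff.mp hγ).2
    have h1 : a α - a γ ≠ 0 := sub_ne_zero.mpr (hinj.ne hγα.symm)
    rw [pderivP_Z2, pderivQ_Z2, pderivP_dM_ne a hγα, pderivQ_dM_ne a hγα]
    field_simp
    ring
  rw [pbracket, Finset.sum_eq_add_sum_sdiff_singleton_of_mem (mem_univ α), Finset.sum_congr rfl key,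
    pderivP_Z2, pderivQ_Z2, pderivP_dM_self, pderivQ_dM_self,
    Finset.sum_eq_add_sum_sdiff_singleton_of_mem (mem_univ α) (fun δ => a δ * p δ ^ 2)]
  simp only [Finset.sum_sub_distrib, Finset.sum_add_distrib, ← Finset.mul_sum]
  ring

set_option maxHeartbeats 2000000 in

lemma pbracket_dM_dM {m : ℕ} (a : Fin m → ℝ) (hinj : Function.Injective a)
    (α β : Fin m) (p q : Fin m → ℝ) :
    pbracket (dualMoser a α) (dualMoser a β) p q = 0 := by
  rcases eq_or_ne α β with rfl | hne
  · exact Finset.sum_eq_zero fun γ _ => by ring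
  · have hβα : β ≠ α := hne.symm
    have hab : a α - a β ≠ 0 := sub_ne_zero.mpr (hinj.ne hne)
    have hba : a β - a α ≠ 0 := sub_ne_zero.mpr (hinj.ne hβα)
    have hβ' : β ∈ univ \ ({α} : Finset (Fin m)) := by simp [hβα]
    have hα' : α ∈ univ \ ({β} : Finset (Fin m)) := by simp [hne]
    have hDα : (univ \ ({α} : Finset (Fin m))) \ {β} = univ \ {α, β} := by
      ext x; simp [not_or, and_comm]
    have hDβ : (univ \ ({β} : Finset (Fin m))) \ {α} = univ \ {α, β} := by
      ext x; simp [not_or, and_comm]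
    have key : ∀ γ ∈ univ \ ({α, β} : Finset (Fin m)),
        pderivP (dualMoser a α) γ p q * pderivQ (dualMoser a β) γ p q -
          pderivQ (dualMoser a α) γ p q * pderivP (dualMoser a β) γ p q =
        (2 * q α * (2 * a α * p α * q β ^ 2 -
            2 * a α * q β * (a β * p β * q α - a α * p α * q β) / (a β - a α)) -
         2 * q β * (2 * a β * p β * q α ^ 2 -
            2 * a β * q α * (a α * p α * q β - a β * p β * q α) / (a α - a β))) *
          (a γ * p γ ^ 2) -
        (2 * a β * p β * (a β * p β * q α - a α * p α * q β) / (a β - a α)) *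
          (2 * a α * q γ * (a α * p α * q γ - a γ * p γ * q α) / (a α - a γ)) -
        (2 * a α * p α * q β ^ 2 -
            2 * a α * q β * (a β * p β * q α - a α * p α * q β) / (a β - a α)) *
          (2 * a γ * p γ * (a α * p α * q γ - a γ * p γ * q α) / (a α - a γ)) +
        (2 * a α * p α * (a α * p α * q β - a β * p β * q α) / (a α - a β)) *
          (2 * a β * q γ * (a β * p β * q γ - a γ * p γ * q β) / (a β - a γ)) +
        (2 * a β * p β * q α ^ 2 -
            2 * a β * q α * (a α * p α * q β - a β * p β * q α) / (a α - a β)) *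
          (2 * a γ * p γ * (a β * p β * q γ - a γ * p γ * q β) / (a β - a γ)) := by
      intro γ hγ
      have hγ' : γ ≠ α ∧ γ ≠ β := by simpa [not_or] using (Finset.mem_sdiff.mp hγ).2
      have h1 : a α - a γ ≠ 0 := sub_ne_zero.mpr (hinj.ne hγ'.1.symm)
      have h2 : a β - a γ ≠ 0 := sub_ne_zero.mpr (hinj.ne hγ'.2.symm)
      rw [pderivP_dM_ne a hγ'.1, pderivQ_dM_ne a hγ'.1, pderivP_dM_ne a hγ'.2,
        pderivQ_dM_ne a hγ'.2]
      field_simp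
      ring
    rw [pbracket, Finset.sum_eq_add_sum_sdiff_singleton_of_mem (mem_univ α),
      Finset.sum_eq_add_sum_sdiff_singleton_of_mem hβ', hDα, Finset.sum_congr rfl key,
      pderivP_dM_self a α, pderivQ_dM_self a α, pderivP_dM_self a β, pderivQ_dM_self a β,
      pderivP_dM_ne a hβα, pderivQ_dM_ne a hβα, pderivP_dM_ne a hne, pderivQ_dM_ne a hne,
      Finset.sum_eq_add_sum_sdiff_singleton_of_mem (mem_univ α) (fun δ => a δ * p δ ^ 2)]
    simp only [Finset.sum_eq_add_sum_sdiff_singleton_of_mem hβ', Finset.sum_eq_add_sum_sdiff_singleton_of_mem hα',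
      hDα, hDβ]
    simp only [Finset.sum_sub_distrib, Finset.sum_add_distrib, ← Finset.mul_sum]
    field_simp
    ring

/-- at every point of the constraint surface `{Z_1 = 0, Z_2 = 0}`,
the Dirac bracket of any two dual Moser functions vanishes. -/
theorem dualMoser_dirac_bracket (n : ℕ) (hn : 1 ≤ n)
    (a : Fin (n + 1) → ℝ) (ha0 : 0 < a 0) (hmono : StrictMono a)
    (p q : Fin (n + 1) → ℝ) (h1 : Z1 p q = 0) (h2 : Z2 p q = 0)
    (α β : Fin (n + 1)) :
    pbracket (dualMoser a α) (dualMoser a β) p q -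
      (1 / pbracket Z1 Z2 p q) *
        (pbracket Z1 (dualMoser a α) p q * pbracket Z2 (dualMoser a β) p q -
          pbracket Z1 (dualMoser a β) p q * pbracket Z2 (dualMoser a α) p q) = 0 := by
  have hinj := hmono.injective
  rw [pbracket_dM_dM a hinj α β p q, pbracket_Z2_dM a hinj β p q, pbracket_Z2_dM a hinj α p q]
  ring
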